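/- arXiv:2204.08723 — 3 statements merged into one kernel-verified Lean document; each statement's English description precedes it below -/
import Mathlib

section
/- Suppose 0 < L < H and 0 < θ1 < θ2 < 1, with (α(θ1),β(θ1)), (α(θ2),β(θ2)) ∈ [0,1]² satisfying the mutual incentive constraints (1-α(θi))L + θi(α(θi)L + β(θi)(H-L)) ≥ (1-α(θj))L + θi(α(θj)L + β(θj)(H-L)) for {i,j}={1,2}. Then α(θ1) ≤ α(θ2). -/
/-- Monotonicity of `α` in the seller's type, from mutual incentive constraints. -/
theorem alpha_monotone
    (L H θ1 θ2 a1 b1 a2 b2 : ℝ)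
    (hL : 0 < L) (hLH : L < H)
    (hθ1 : 0 < θ1) (hθ : θ1 < θ2) (hθ2 : θ2 < 1)
    (ha1 : a1 ∈ Set.Icc (0:ℝ) 1) (hb1 : b1 ∈ Set.Icc (0:ℝ) 1)
    (ha2 : a2 ∈ Set.Icc (0:ℝ) 1) (hb2 : b2 ∈ Set.Icc (0:ℝ) 1)
    (hIC1 : (1 - a1) * L + θ1 * (a1 * L + b1 * (H - L))
              ≥ (1 - a2) * L + θ1 * (a2 * L + b2 * (H - L)))
    (hIC2 : (1 - a2) * L + θ2 * (a2 * L + b2 * (H - L))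
              ≥ (1 - a1) * L + θ2 * (a1 * L + b1 * (H - L))) :
    a1 ≤ a2 := by
  set S := (a2 - a1) * L + (b2 - b1) * (H - L) with hS
  have h1 : (a2 - a1) * L ≥ θ1 * S := by rw [hS]; nlinarith [hIC1]
  have h2 : θ2 * S ≥ (a2 - a1) * L := by rw [hS]; nlinarith [hIC2]
  have hSnn : 0 ≤ S := by nlinarith
  nlinarith
end

section
/- Let 0 < L < H with L/H ≥ 1/2 and let the seller type be uniform on [0,1]. Consider the buyer-surplus function along high-value flagging signals, U(y) = (1/2)(H-L)y² - (1/2)(Hy-L)y for y ∈ [L/H, 1]. Then U(y) is maximized at y = L/H, i.e., the uninformative signal maximizes buyer surplus among high-value flagging signals. -/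
/-- If `L/H ≥ 1/2`, the uninformative signal (`y = L/H`) maximizes buyer
surplus among high-value flagging signals. -/
theorem uninformative_buyer_optimal
    (L H : ℝ) (hL : 0 < L) (hLH : L < H) (hhalf : L / H ≥ 1 / 2) :
    ∀ y ∈ Set.Icc (L / H) 1,
      (1 / 2) * (H - L) * y ^ 2 - (1 / 2) * (H * y - L) * y
        ≤ (1 / 2) * (H - L) * (L / H) ^ 2 - (1 / 2) * (H * (L / H) - L) * (L / H) := by
  intro y hy
  obtain ⟨h1, h2⟩ := hy
  have hH : 0 < H := hL.trans hLH
  have hx : L / H ≥ 1 / 2 := hhalf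
  have hxy : L / H ≤ y := h1
  -- U(y) = (1/2) L y (1-y); difference factors as (1/2)L(y - x)(x + y - 1) ≥ 0
  have key : (y - L / H) * (L / H + y - 1) ≥ 0 := by
    apply mul_nonneg (by linarith)
    linarith
  have hLH' : H * (L / H) = L := by field_simp
  nlinarith [mul_nonneg hL.le key]
end

section
/- Suppose 0 < L < H and 0 < θ1 < θ2 < 1 with θ1 < L/H < θ2. There do not exist signal parameters (α1,β1),(α2,β2) ∈ [0,1]² with βi ≥ αi such that: (i) both types weakly prefer their own signal, i.e., (1-αi)L + θi(αiL + βi(H-L)) ≥ (1-αj)L + θi(αjL + βj(H-L)) for {i,j}={1,2}; (ii) type θ1 earns exactly her no-information profit L, i.e., (1-α1)L + θ1(α1 L + β1(H-L)) = L; and (iii) the outcome is efficient with β2 > 0 and α2 = 0 (type θ2 receives a high-value flagging signal with positive flagging rate) while type θ1's allocation is uninformative (α1 = β1 = 0). -/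
/-- The buyer-optimal efficient outcome is not implementable with two types
straddling `L/H`: no incentive-compatible pair of signals gives the low type
no information and no rents while giving the high type a high-value flagging
signal with positive flagging rate. -/
theorem no_efficient_zero_rent
    (L H θ1 θ2 : ℝ) (hL : 0 < L) (hLH : L < H)
    (hθ1 : 0 < θ1) (hθ : θ1 < θ2) (hθ2 : θ2 < 1)
    (h1 : θ1 < L / H) (h2 : L / H < θ2) :
    ¬ ∃ a1 b1 a2 b2 : ℝ,
      a1 ∈ Set.Icc (0:ℝ) 1 ∧ b1 ∈ Set.Icc (0:ℝ) 1 ∧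
      a2 ∈ Set.Icc (0:ℝ) 1 ∧ b2 ∈ Set.Icc (0:ℝ) 1 ∧
      a1 ≤ b1 ∧ a2 ≤ b2 ∧
      ((1 - a1) * L + θ1 * (a1 * L + b1 * (H - L))
          ≥ (1 - a2) * L + θ1 * (a2 * L + b2 * (H - L))) ∧
      ((1 - a2) * L + θ2 * (a2 * L + b2 * (H - L))
          ≥ (1 - a1) * L + θ2 * (a1 * L + b1 * (H - L))) ∧
      ((1 - a1) * L + θ1 * (a1 * L + b1 * (H - L)) = L) ∧
      b2 > 0 ∧ a2 = 0 ∧ a1 = 0 ∧ b1 = 0 := by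
  rintro ⟨a1,b1,a2,b2,_,_,_,_,_,_,ic1,_,_,hb2,ha2,ha1,hb1⟩
  subst ha1; subst hb1; subst ha2
  nlinarith [mul_pos hθ1 (mul_pos hb2 (sub_pos.mpr hLH))]
end
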